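/- The subspace M = {a(1 + z + z²) + b·z(1 + 2z) : a, b ∈ ℂ} of H²(𝔻) is nearly (S²)*-invariant and nearly (S³)*-invariant, but is not nearly S*-invariant. -/

import Mathlib

open scoped InnerProductSpace

/-!
Identify `e n` with `zⁿ`. Every element of `M` is `a + (a + b) z + (a + 2b) z²`. If it lies in the
range of `S²` (or `S³`), its coefficients of `1` and `z` vanish, so `a = b = 0` and the condition is
trivial. On the other hand `z + 2z² = S(1 + 2z)` lies in `M`, but `S*(z + 2z²) = 1 + 2z` would need
`a = 1`, `a + b = 2`, `a + 2b = 0`.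
-/

def NearlyAdjointInvariant {H : Type*} [NormedAddCommGroup H] [InnerProductSpace ℂ H]
    [CompleteSpace H] (T : H →L[ℂ] H) (M : Set H) : Prop :=
  ∀ f ∈ M, (∃ g, T g = f) → ContinuousLinearMap.adjoint T f ∈ M

namespace HilbertBasis

variable {ι 𝕜 E : Type*} [RCLike 𝕜] [NormedAddCommGroup E] [InnerProductSpace 𝕜 E]

theorem ext_inner {b : HilbertBasis ι 𝕜 E} {x y : E} (h : ∀ i, ⟪b i, x⟫_𝕜 = ⟪b i, y⟫_𝕜) :
    x = y :=
  b.repr.injective <| lp.ext <| funext fun i => by simp only [b.repr_apply_apply, h i]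

theorem inner_eq_ite [DecidableEq ι] (b : HilbertBasis ι 𝕜 E) (i j : ι) :
    ⟪b i, b j⟫_𝕜 = if i = j then 1 else 0 :=
  orthonormal_iff_ite.mp b.orthonormal i j

end HilbertBasis

namespace ForwardShift

variable {H : Type*} [NormedAddCommGroup H] [InnerProductSpace ℂ H] [CompleteSpace H]
  {e : HilbertBasis ℕ ℂ H} {S : H →L[ℂ] H}

theorem adjoint_apply_basis_zero (hS : ∀ n, S (e n) = e (n + 1)) :
    ContinuousLinearMap.adjoint S (e 0) = 0 :=
  HilbertBasis.ext_inner (b := e) fun m => by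
    rw [ContinuousLinearMap.adjoint_inner_right, hS, e.inner_eq_ite, inner_zero_right]
    simp

theorem adjoint_apply_basis_succ (hS : ∀ n, S (e n) = e (n + 1)) (n : ℕ) :
    ContinuousLinearMap.adjoint S (e (n + 1)) = e n :=
  HilbertBasis.ext_inner (b := e) fun m => by
    rw [ContinuousLinearMap.adjoint_inner_right, hS, e.inner_eq_ite, e.inner_eq_ite]
    simp

theorem inner_basis_zero_apply (hS : ∀ n, S (e n) = e (n + 1)) (x : H) :
    ⟪e 0, S x⟫_ℂ = 0 := by
  rw [← ContinuousLinearMap.adjoint_inner_left, adjoint_apply_basis_zero hS, inner_zero_left]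

theorem inner_basis_succ_apply (hS : ∀ n, S (e n) = e (n + 1)) (n : ℕ) (x : H) :
    ⟪e (n + 1), S x⟫_ℂ = ⟪e n, x⟫_ℂ := by
  rw [← ContinuousLinearMap.adjoint_inner_left, adjoint_apply_basis_succ hS]

theorem inner_basis_pow_apply_of_lt (hS : ∀ n, S (e n) = e (n + 1)) {m k : ℕ} (hmk : m < k)
    (x : H) : ⟪e m, (S ^ k) x⟫_ℂ = 0 := by
  induction k generalizing m with
  | zero => omega
  | succ k ih =>
    rw [pow_succ', mul_apply_eq_comp]
    cases m with
    | zero => exact inner_basis_zero_apply hS _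
    | succ m => rw [inner_basis_succ_apply hS, ih (by omega)]

end ForwardShift

section Example

open ForwardShift

variable {H : Type*} [NormedAddCommGroup H] [InnerProductSpace ℂ H] [CompleteSpace H]

/-- The span of `1 + z + z²` and `z + 2z²`. -/
def quadraticExample (e : HilbertBasis ℕ ℂ H) : Set H :=
  {x | ∃ a b : ℂ, x = a • (e 0 + e 1 + e 2) + b • (e 1 + (2 : ℂ) • e 2)}

theorem nearlyAdjointInvariant_shift_pow {e : HilbertBasis ℕ ℂ H} {S : H →L[ℂ] H}
    (hS : ∀ n, S (e n) = e (n + 1)) {k : ℕ} (hk : 2 ≤ k) :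
    NearlyAdjointInvariant (S ^ k) (quadraticExample e) := by
  rintro f ⟨a, b, rfl⟩ ⟨g, hg⟩
  have hcoeff (m : ℕ) (hm : m < k) :=
    hg ▸ inner_basis_pow_apply_of_lt hS hm g
  have ha : a = 0 := by
    simpa [inner_add_right, inner_smul_right, e.inner_eq_ite, e.orthonormal.1]
      using hcoeff 0 (by omega)
  have hb : b = 0 := by
    simpa [ha, inner_add_right, inner_smul_right, e.inner_eq_ite, e.orthonormal.1]
      using hcoeff 1 (by omega)
  exact ⟨0, 0, by simp [ha, hb]⟩

theorem not_nearlyAdjointInvariant_shift {e : HilbertBasis ℕ ℂ H} {S : H →L[ℂ] H}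
    (hS : ∀ n, S (e n) = e (n + 1)) :
    ¬ NearlyAdjointInvariant S (quadraticExample e) := by
  intro h
  have hS_mem : S (e 0 + (2 : ℂ) • e 1) = e 1 + (2 : ℂ) • e 2 := by
    simp only [map_add, map_smul, hS]
  obtain ⟨a, b, hab⟩ := h _ ⟨0, 1, by simp⟩ ⟨_, hS_mem⟩
  rw [map_add, map_smul, adjoint_apply_basis_succ hS, adjoint_apply_basis_succ hS] at hab
  have hcoeff (m : ℕ) := congrArg (fun x => ⟪e m, x⟫_ℂ) hab
  have h0 : (1 : ℂ) = a := by
    simpa [inner_add_right, inner_smul_right, e.inner_eq_ite, e.orthonormal.1] using hcoeff 0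
  have h1 : (2 : ℂ) = a + b := by
    simpa [inner_add_right, inner_smul_right, e.inner_eq_ite, e.orthonormal.1] using hcoeff 1
  have h2 : (0 : ℂ) = a + b * 2 := by
    simpa [inner_add_right, inner_smul_right, e.inner_eq_ite, e.orthonormal.1] using hcoeff 2
  have : (3 : ℂ) = 0 := by linear_combination -h2 + 2 * h1 - h0
  norm_num at this

end Example

/-- Hardy space model: `H` with Hilbert basis `e n ↔ zⁿ`, shift `S : e n ↦ e (n+1)`.
`M = {a(1 + z + z²) + b·z(1 + 2z) : a, b ∈ ℂ}` is nearly `(S²)*`-invariant and nearly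
`(S³)*`-invariant, but not nearly `S*`-invariant. -/
theorem stmt_15 {H : Type*} [NormedAddCommGroup H] [InnerProductSpace ℂ H] [CompleteSpace H]
    (e : HilbertBasis ℕ ℂ H) (S : H →L[ℂ] H) (hS : ∀ n : ℕ, S (e n) = e (n + 1))
    (M : Set H)
    (hM : M = {x | ∃ a b : ℂ, x = a • (e 0 + e 1 + e 2) + b • (e 1 + (2 : ℂ) • e 2)}) :
    (∀ f ∈ M, (∃ g, (S ^ 2) g = f) → ContinuousLinearMap.adjoint (S ^ 2) f ∈ M) ∧
    (∀ f ∈ M, (∃ g, (S ^ 3) g = f) → ContinuousLinearMap.adjoint (S ^ 3) f ∈ M) ∧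
    ¬ (∀ f ∈ M, (∃ g, S g = f) → ContinuousLinearMap.adjoint S f ∈ M) := by
  subst hM
  exact ⟨nearlyAdjointInvariant_shift_pow hS le_rfl,
    nearlyAdjointInvariant_shift_pow hS (by norm_num), not_nearlyAdjointInvariant_shift hS⟩
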